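/- arXiv:1610.05372 — 2 statements merged into one kernel-verified Lean document; each statement's English description precedes it below -/
import Mathlib

section
/- Grönwall-type differential inequality yielding the vortex patch convergence rate: suppose y : [0,T] → [0,∞) is differentiable with y(0) = 0 and satisfies y'(t) ≤ 2K y(t) + 2Cν M^{2/(1+α)} y(t)^{α/(1+α)} for all t ∈ [0,T], where K, C, M, ν > 0 and α ∈ (0,1). Then y(t) ≤ (C' ν t)^{1+α} e^{2(1+α)Kt} M² for all t ∈ [0,T], for some constant C' depending only on C and α. -/
open Real Set Filter Topology

/-!
Weighting by `exp (-2Kt)` removes the linear term: `φ = y e^{-2Kt}` satisfies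
`φ' ≤ a φ^β` with `a = 2Cν M^{2/(1+α)}` and `β = α/(1+α)`, because `e^{-2Kt} ≤ (e^{-2Kt})^β`.
The solution of `z' = a z^β`, `z(0) = 0`, is `(a t/(1+α))^{1+α}`, and a barrier `(ct + ε)^{1+α}`
with `c(1+α) > a` cannot be crossed by `φ`; letting `ε → 0` and taking `c = a` gives the rate
with `C' = 2C`.
-/

section Comparison

variable {φ φ' : ℝ → ℝ} {a c p β T : ℝ}

theorem image_le_add_rpow_of_deriv_right_le_mul_rpow (hφ : ContinuousOn φ (Icc 0 T))
    (hφ' : ∀ x ∈ Ico 0 T, HasDerivWithinAt φ (φ' x) (Ici x) x)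
    (hbound : ∀ x ∈ Ico 0 T, φ' x ≤ a * φ x ^ β) (h0 : φ 0 ≤ 0) (hβp : β * p = p - 1)
    (hc : 0 ≤ c) (hac : a < c * p) {ε : ℝ} (hε : 0 < ε) :
    ∀ t ∈ Icc 0 T, φ t ≤ (c * t + ε) ^ p := by
  have hpos : ∀ x ∈ Icc (0 : ℝ) T, 0 < c * x + ε := fun x hx => by
    have := mul_nonneg hc hx.1
    linarith
  have hB : ∀ x ∈ Icc (0 : ℝ) T,
      HasDerivAt (fun s => (c * s + ε) ^ p) (c * p * (c * x + ε) ^ (p - 1)) x := by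
    intro x hx
    simpa using (((hasDerivAt_id x).const_mul c).add_const ε).rpow_const
      (p := p) (Or.inl (hpos x hx).ne')
  refine image_le_of_deriv_right_lt_deriv_boundary' hφ hφ' ?_
    (fun x hx => (hB x hx).continuousAt.continuousWithinAt)
    (fun x hx => (hB x (Ico_subset_Icc_self hx)).hasDerivWithinAt) ?_
  · simpa using h0.trans (rpow_nonneg hε.le p)
  · intro x hx hxB
    have hx' := Ico_subset_Icc_self hx
    have hφβ : φ x ^ β = (c * x + ε) ^ (p - 1) := by
      rw [hxB, ← rpow_mul (hpos x hx').le, mul_comm p β, hβp]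
    calc φ' x ≤ a * φ x ^ β := hbound x hx
      _ < c * p * (c * x + ε) ^ (p - 1) := by
        rw [hφβ]
        exact mul_lt_mul_of_pos_right hac (rpow_pos_of_pos (hpos x hx') _)

theorem image_le_rpow_of_deriv_right_le_mul_rpow (hφ : ContinuousOn φ (Icc 0 T))
    (hφ' : ∀ x ∈ Ico 0 T, HasDerivWithinAt φ (φ' x) (Ici x) x)
    (hbound : ∀ x ∈ Ico 0 T, φ' x ≤ a * φ x ^ β) (h0 : φ 0 ≤ 0) (hp : 0 < p)
    (hβp : β * p = p - 1) (hc : 0 ≤ c) (hac : a < c * p) :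
    ∀ t ∈ Icc 0 T, φ t ≤ (c * t) ^ p := by
  intro t ht
  have hlim : Tendsto (fun ε => (c * t + ε) ^ p) (𝓝[>] 0) (𝓝 ((c * t) ^ p)) := by
    have hcont : Continuous fun ε : ℝ => (c * t + ε) ^ p :=
      (continuous_const.add continuous_id).rpow_const fun _ => Or.inr hp.le
    simpa using (hcont.tendsto 0).mono_left nhdsWithin_le_nhds
  exact ge_of_tendsto hlim (eventually_mem_nhdsWithin.mono fun ε hε =>
    image_le_add_rpow_of_deriv_right_le_mul_rpow hφ hφ' hbound h0 hβp hc hac hε t ht)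

end Comparison

theorem sub_mul_exp_neg_le_mul_rpow {y y' κ a β x : ℝ} (hy : 0 ≤ y) (hx : 0 ≤ x) (hκ : 0 ≤ κ)
    (ha : 0 ≤ a) (hβ : β ≤ 1) (h : y' ≤ κ * y + a * y ^ β) :
    (y' - κ * y) * exp (-(κ * x)) ≤ a * (y * exp (-(κ * x))) ^ β := by
  have hexp : exp (-(κ * x)) ≤ exp (-(κ * x)) ^ β := by
    rw [← exp_mul]
    exact exp_le_exp.2 (by nlinarith [mul_nonneg (mul_nonneg hκ hx) (sub_nonneg.2 hβ)])
  calc (y' - κ * y) * exp (-(κ * x)) ≤ a * y ^ β * exp (-(κ * x)) :=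
        mul_le_mul_of_nonneg_right (by linarith) (exp_pos _).le
    _ ≤ a * y ^ β * exp (-(κ * x)) ^ β := by
        have := rpow_nonneg hy β
        gcongr
    _ = a * (y * exp (-(κ * x))) ^ β := by rw [mul_rpow hy (exp_pos _).le, mul_assoc]

theorem le_rpow_mul_exp_of_deriv_le {y y' : ℝ → ℝ} {κ a c p β T : ℝ}
    (hy : ∀ t ∈ Icc 0 T, 0 ≤ y t) (hy0 : y 0 = 0)
    (hderiv : ∀ t ∈ Icc 0 T, HasDerivAt y (y' t) t)
    (hbound : ∀ t ∈ Icc 0 T, y' t ≤ κ * y t + a * y t ^ β) (hκ : 0 ≤ κ) (ha : 0 ≤ a)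
    (hp : 0 < p) (hβp : β * p = p - 1) (hc : 0 ≤ c) (hac : a < c * p) :
    ∀ t ∈ Icc 0 T, y t ≤ (c * t) ^ p * exp (κ * t) := by
  set φ : ℝ → ℝ := fun s => y s * exp (-(κ * s)) with hφ
  have hφ' : ∀ x ∈ Icc 0 T, HasDerivAt φ ((y' x - κ * y x) * exp (-(κ * x))) x := by
    intro x hx
    have hexp : HasDerivAt (fun s => exp (-(κ * s))) (exp (-(κ * x)) * -(κ * 1)) x :=
      ((hasDerivAt_id x).const_mul κ).neg.exp
    exact ((hderiv x hx).mul hexp).congr_deriv (by ring)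
  have hβ : β ≤ 1 := by nlinarith
  have hφle := image_le_rpow_of_deriv_right_le_mul_rpow
    (fun x hx => (hφ' x hx).continuousAt.continuousWithinAt)
    (fun x hx => (hφ' x (Ico_subset_Icc_self hx)).hasDerivWithinAt)
    (fun x hx => sub_mul_exp_neg_le_mul_rpow (hy x (Ico_subset_Icc_self hx)) hx.1 hκ ha hβ
      (hbound x (Ico_subset_Icc_self hx)))
    (by simp [hφ, hy0]) hp hβp hc hac
  intro t ht
  calc y t = φ t * exp (κ * t) := by simp [hφ, mul_assoc, ← exp_add]
    _ ≤ (c * t) ^ p * exp (κ * t) := mul_le_mul_of_nonneg_right (hφle t ht) (exp_pos _).le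

/-- Grönwall-type differential inequality yielding the vortex patch convergence rate:
if y ≥ 0, y(0) = 0 and y' ≤ 2K y + 2Cν M^{2/(1+α)} y^{α/(1+α)} on [0,T], then
y(t) ≤ (C'νt)^{1+α} e^{2(1+α)Kt} M², with C' depending only on C and α. -/
theorem gronwall_vortex_patch_rate (C α : ℝ) (hC : 0 < C) (hα : α ∈ Set.Ioo (0:ℝ) 1) :
    ∃ C' > (0:ℝ), ∀ (K M ν T : ℝ), 0 < K → 0 < M → 0 < ν → 0 < T →
      ∀ y : ℝ → ℝ,
        (∀ t ∈ Set.Icc (0:ℝ) T, 0 ≤ y t) →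
        y 0 = 0 →
        (∀ t ∈ Set.Icc (0:ℝ) T, HasDerivAt y (deriv y t) t ∧
          deriv y t ≤ 2 * K * y t + 2 * C * ν * M ^ (2 / (1 + α)) * (y t) ^ (α / (1 + α))) →
        ∀ t ∈ Set.Icc (0:ℝ) T,
          y t ≤ (C' * ν * t) ^ (1 + α) * Real.exp (2 * (1 + α) * K * t) * M ^ 2 := by
  obtain ⟨hα0, -⟩ := hα
  refine ⟨2 * C, by positivity, fun K M ν T hK hM hν _ y hy hy0 hyd t ht => ?_⟩
  set a := 2 * C * ν * M ^ (2 / (1 + α))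
  have hapos : 0 < a := by positivity
  have hrate := le_rpow_mul_exp_of_deriv_le (c := a) (p := 1 + α) hy hy0
    (fun s hs => (hyd s hs).1) (fun s hs => (hyd s hs).2) (by positivity) hapos.le
    (by linarith) (by field_simp; ring) hapos.le (lt_mul_of_one_lt_right hapos (by linarith)) t ht
  have hCt : 0 ≤ 2 * C * ν * t := mul_nonneg (by positivity) ht.1
  have hsplit : (a * t) ^ (1 + α) = (2 * C * ν * t) ^ (1 + α) * M ^ 2 := by
    rw [show a * t = 2 * C * ν * t * M ^ (2 / (1 + α)) by ring, mul_rpow hCt (by positivity),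
      ← rpow_mul hM.le, div_mul_cancel₀ _ (by linarith), rpow_two]
  have hexp : exp (2 * K * t) ≤ exp (2 * (1 + α) * K * t) :=
    exp_le_exp.2 (by nlinarith [mul_nonneg (mul_nonneg hα0.le hK.le) ht.1])
  calc y t ≤ (2 * C * ν * t) ^ (1 + α) * M ^ 2 * exp (2 * K * t) := hsplit ▸ hrate
    _ ≤ (2 * C * ν * t) ^ (1 + α) * exp (2 * (1 + α) * K * t) * M ^ 2 := by
      rw [mul_right_comm]
      gcongr
end

section
/- L^∞ ∩ BV embeds into the Besov space Ḃ^{1/2}_{2,∞}: there exists C > 0 such that for every function f ∈ L^∞(ℝⁿ) ∩ BV(ℝⁿ), sup_{h≠0} |h|^{−1/2} ‖f(·+h) − f‖_{L²(ℝⁿ)} ≤ C (‖f‖_{L^∞} ‖f‖_{BV})^{1/2}. -/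
open Real MeasureTheory
open scoped ENNReal

/-!
Interpolation between `L¹` and `L^∞`: a function bounded by `c` satisfies
`‖g‖₂² = ∫ |g|² ≤ c ∫ |g| = c ‖g‖₁`. Applied to the difference `g = f(· + h) - f`, which is
bounded by `2M` and has `L¹` norm at most `V ‖h‖`, this gives `‖g‖₂ ≤ √2 √(MV) √‖h‖`.
-/

theorem MeasureTheory.eLpNorm_two_sq_le_mul_eLpNorm_one {α ε : Type*} [MeasurableSpace α]
    [ENorm ε] {μ : Measure α} {f : α → ε} {c : ℝ≥0∞} (hc : c ≠ ∞)
    (hf : ∀ᵐ x ∂μ, ‖f x‖ₑ ≤ c) : eLpNorm f 2 μ ^ 2 ≤ c * eLpNorm f 1 μ := by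
  have hsq := eLpNorm_nnreal_pow_eq_lintegral (μ := μ) (f := f) (p := 2) two_ne_zero
  simp only [NNReal.coe_ofNat, ENNReal.coe_ofNat, ENNReal.rpow_two] at hsq
  rw [hsq, eLpNorm_one_eq_lintegral_enorm, ← lintegral_const_mul' c _ hc]
  refine lintegral_mono_ae (hf.mono fun x hx => ?_)
  rw [sq]
  exact mul_le_mul_left hx _

theorem ENNReal.le_ofReal_sqrt_of_sq_le {x : ℝ≥0∞} {y : ℝ} (h : x ^ 2 ≤ ENNReal.ofReal y) :
    x ≤ ENNReal.ofReal √y := by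
  rwa [← ENNReal.pow_le_pow_left_iff two_ne_zero, ← ENNReal.ofReal_pow (Real.sqrt_nonneg y),
    Real.sq_sqrt', ENNReal.ofReal_max, ENNReal.ofReal_zero, max_zero]

/-- L^∞ ∩ BV embeds into Ḃ^{1/2}_{2,∞}: there is a universal constant C such that
whenever f is bounded by M and has the BV translation property
‖f(·+h) − f‖_{L¹} ≤ V‖h‖, then ‖f(·+h) − f‖_{L²} ≤ C √(MV) √‖h‖ for all h ≠ 0,
i.e. sup_{h≠0} ‖h‖^{-1/2} ‖f(·+h) − f‖_{L²} ≤ C (‖f‖_{L^∞} ‖f‖_{BV})^{1/2}. -/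
theorem linfty_bv_embeds_besov_half (n : ℕ) :
    ∃ C > (0:ℝ), ∀ (f : EuclideanSpace ℝ (Fin n) → ℝ) (M V : ℝ), 0 ≤ M → 0 ≤ V →
      (∀ x, |f x| ≤ M) →
      (∀ h : EuclideanSpace ℝ (Fin n),
        eLpNorm (fun x => f (x + h) - f x) 1 volume ≤ ENNReal.ofReal (V * ‖h‖)) →
      ∀ h : EuclideanSpace ℝ (Fin n), h ≠ 0 →
        eLpNorm (fun x => f (x + h) - f x) 2 volume ≤
          ENNReal.ofReal (C * Real.sqrt (M * V) * Real.sqrt ‖h‖) := by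
  refine ⟨√2, by positivity, fun f M V hM hV hbd hbv h _ => ?_⟩
  have hdiff : ∀ x, ‖f (x + h) - f x‖ₑ ≤ ENNReal.ofReal (2 * M) := fun x => by
    rw [← ofReal_norm, Real.norm_eq_abs]
    exact ENNReal.ofReal_le_ofReal (by linarith [abs_sub (f (x + h)) (f x), hbd (x + h), hbd x])
  have hsq : eLpNorm (fun x => f (x + h) - f x) 2 volume ^ 2 ≤
      ENNReal.ofReal (2 * M) * ENNReal.ofReal (V * ‖h‖) :=
    (eLpNorm_two_sq_le_mul_eLpNorm_one ENNReal.ofReal_ne_top (ae_of_all _ hdiff)).trans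
      (mul_le_mul_right (hbv h) _)
  rw [← ENNReal.ofReal_mul (by positivity)] at hsq
  calc _ ≤ ENNReal.ofReal √(2 * M * (V * ‖h‖)) := ENNReal.le_ofReal_sqrt_of_sq_le hsq
    _ = ENNReal.ofReal (√2 * √(M * V) * √‖h‖) := by
      rw [show 2 * M * (V * ‖h‖) = 2 * (M * V) * ‖h‖ by ring,
        Real.sqrt_mul (by positivity), Real.sqrt_mul zero_le_two]
end
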